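/- arXiv:gr-qc/0508029 — 3 statements merged into one kernel-verified Lean document; each statement's English description precedes it below -/
import Mathlib

section
/- Let L : V \ {0} → ℝ be smooth, positively homogeneous of degree two, and suppose each connected component of the set {v : L(v) < -1} is convex. Then each connected component Z of the set {v : L(v) < 0} is a convex cone. -/
open Set

lemma aux_cone {V : Type*} [NormedAddCommGroup V] [NormedSpace ℝ V]
    (L : V → ℝ)
    (hhom : ∀ k : ℝ, 0 < k → ∀ v : V, v ≠ 0 → L (k • v) = k ^ 2 * L v)
    (v : V) :
    ∀ k : ℝ, 0 < k → ∀ u ∈ connectedComponentIn {v : V | v ≠ 0 ∧ L v < 0} v,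
      k • u ∈ connectedComponentIn {v : V | v ≠ 0 ∧ L v < 0} v := by
  set S : Set V := {v : V | v ≠ 0 ∧ L v < 0} with hSdef
  intro k hk u hu
  have huS : u ∈ S := connectedComponentIn_subset S v hu
  set A : Set V := (fun c : ℝ => c • u) '' Icc (min 1 k) (max 1 k) with hA
  have hAconn : IsPreconnected A := by
    refine (isPreconnected_Icc).image _ ?_
    exact (continuous_id.smul continuous_const).continuousOn
  have hAS : A ⊆ S := by
    rintro _ ⟨c, hc, rfl⟩
    have hcpos : 0 < c := lt_of_lt_of_le (lt_min one_pos hk) hc.1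
    refine ⟨smul_ne_zero (ne_of_gt hcpos) huS.1, ?_⟩
    rw [hhom c hcpos u huS.1]
    exact mul_neg_of_pos_of_neg (pow_pos hcpos 2) huS.2
  have h1 : u ∈ A := ⟨1, ⟨min_le_left _ _, le_max_left _ _⟩, one_smul ℝ u⟩
  have h2 : k • u ∈ A := ⟨k, ⟨min_le_right _ _, le_max_right _ _⟩, rfl⟩
  have : A ⊆ connectedComponentIn S u := hAconn.subset_connectedComponentIn h1 hAS
  rw [connectedComponentIn_eq hu]
  exact this h2

/-- If each connected component of `{v ≠ 0 | L v < -1}` is convex, then each connected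
component of `{v ≠ 0 | L v < 0}` is an (open) convex cone. -/
theorem components_of_timelike_set_are_convex_cones
    {V : Type*} [NormedAddCommGroup V] [NormedSpace ℝ V] [FiniteDimensional ℝ V]
    (L : V → ℝ)
    (hsmooth : ContDiffOn ℝ (⊤ : ℕ∞) L {(0 : V)}ᶜ)
    (hhom : ∀ k : ℝ, 0 < k → ∀ v : V, v ≠ 0 → L (k • v) = k ^ 2 * L v)
    (hBeem : ∀ v ∈ {v : V | v ≠ 0 ∧ L v < -1},
      Convex ℝ (connectedComponentIn {v : V | v ≠ 0 ∧ L v < -1} v))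
    (v : V) (hv : v ∈ {v : V | v ≠ 0 ∧ L v < 0}) :
    Convex ℝ (connectedComponentIn {v : V | v ≠ 0 ∧ L v < 0} v) ∧
      (∀ k : ℝ, 0 < k → ∀ u ∈ connectedComponentIn {v : V | v ≠ 0 ∧ L v < 0} v,
        k • u ∈ connectedComponentIn {v : V | v ≠ 0 ∧ L v < 0} v) := by
  set S : Set V := {v : V | v ≠ 0 ∧ L v < 0} with hSdef
  set T : Set V := {v : V | v ≠ 0 ∧ L v < -1} with hTdef
  have hTS : T ⊆ S := fun x hx => ⟨hx.1, hx.2.trans (by norm_num)⟩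
  have hLcont : ContinuousOn L {(0 : V)}ᶜ := hsmooth.continuousOn
  have hSopen : IsOpen S := by
    have : S = {(0 : V)}ᶜ ∩ L ⁻¹' Iio 0 := by
      ext x
      simp only [hSdef, mem_setOf_eq, mem_inter_iff, mem_compl_iff,
        mem_singleton_iff, mem_preimage, mem_Iio]
    rw [this]
    exact hLcont.isOpen_inter_preimage isOpen_compl_singleton isOpen_Iio
  have hcone := aux_cone L hhom v
  refine ⟨?_, hcone⟩
  -- convexity
  intro u hu w hw a b ha hb hab
  -- Z is open and connected, hence path-connected
  have hZopen : IsOpen (connectedComponentIn S v) := hSopen.connectedComponentIn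
  have hZconn : IsConnected (connectedComponentIn S v) :=
    (isConnected_connectedComponentIn_iff).mpr hv
  have hZpath : IsPathConnected (connectedComponentIn S v) :=
    (hZopen.isConnected_iff_isPathConnected).mp hZconn
  obtain ⟨γ, hγ⟩ : JoinedIn (connectedComponentIn S v) u w := hZpath.joinedIn u hu w hw
  set K : Set V := Set.range γ with hK
  have hKS : K ⊆ S := by
    rintro _ ⟨t, rfl⟩
    exact connectedComponentIn_subset S v (hγ t)
  have hKcomp : IsCompact K := isCompact_range γ.continuous
  have hKne : K.Nonempty := ⟨u, 0, γ.source⟩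
  have hKcont : ContinuousOn L K := hLcont.mono (fun x hx => (hKS hx).1)
  obtain ⟨z, hzK, hzmax⟩ := hKcomp.exists_isMaxOn hKne hKcont
  have hzneg : L z < 0 := (hKS hzK).2
  have hnegz : (0:ℝ) < -L z := neg_pos.mpr hzneg
  have hdiv : (0:ℝ) < 2 / (-L z) := div_pos two_pos hnegz
  set c : ℝ := Real.sqrt (2 / (-L z)) with hc
  have hcpos : 0 < c := Real.sqrt_pos.mpr hdiv
  have hc2 : c ^ 2 = 2 / (-L z) := Real.sq_sqrt hdiv.le
  have hscale : ∀ x ∈ K, c • x ∈ T := by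
    intro x hx
    refine ⟨smul_ne_zero (ne_of_gt hcpos) (hKS hx).1, ?_⟩
    rw [hhom c hcpos x (hKS hx).1, hc2]
    have h1 : 2 / (-L z) * L x ≤ 2 / (-L z) * L z :=
      mul_le_mul_of_nonneg_left (hzmax hx) hdiv.le
    have h2 : 2 / (-L z) * L z = -2 := by
      rw [div_mul_eq_mul_div, div_eq_iff (neg_ne_zero.mpr (ne_of_lt hzneg))]
      ring
    linarith
  -- the scaled path lies in T
  have hcuT : c • u ∈ T := hscale u ⟨0, γ.source⟩
  have hcwT : c • w ∈ T := hscale w ⟨1, γ.target⟩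
  set A : Set V := (fun x => c • x) '' K with hA
  have hAconn : IsPreconnected A :=
    ((isConnected_range γ.continuous).image _
      (continuous_const.smul continuous_id).continuousOn).isPreconnected
  have hAT : A ⊆ T := by rintro _ ⟨x, hx, rfl⟩; exact hscale x hx
  have hcwcomp : c • w ∈ connectedComponentIn T (c • u) := by
    have := hAconn.subset_connectedComponentIn
      (⟨u, ⟨0, γ.source⟩, rfl⟩ : c • u ∈ A) hAT
    exact this ⟨w, ⟨1, γ.target⟩, rfl⟩
  -- convex combination in component of T
  have hcuTcomp : c • u ∈ connectedComponentIn T (c • u) := mem_connectedComponentIn hcuT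
  have hP : a • (c • u) + b • (c • w) ∈ connectedComponentIn T (c • u) :=
    hBeem (c • u) hcuT hcuTcomp hcwcomp ha hb hab
  -- that component is a connected subset of S containing c•u
  have hTcompS : connectedComponentIn T (c • u) ⊆ connectedComponentIn S (c • u) :=
    (isPreconnected_connectedComponentIn).subset_connectedComponentIn hcuTcomp
      ((connectedComponentIn_subset T (c • u)).trans hTS)
  have hcuZ : c • u ∈ connectedComponentIn S v := hcone c hcpos u hu
  have hPZ : a • (c • u) + b • (c • w) ∈ connectedComponentIn S v := by
    rw [connectedComponentIn_eq hcuZ]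
    exact hTcompS hP
  have hfinal := hcone c⁻¹ (inv_pos.mpr hcpos) _ hPZ
  have : c⁻¹ • (a • (c • u) + b • (c • w)) = a • u + b • w := by
    rw [smul_add]
    rw [smul_comm c⁻¹ a, smul_comm c⁻¹ b, inv_smul_smul₀ (ne_of_gt hcpos),
      inv_smul_smul₀ (ne_of_gt hcpos)]
  rwa [this] at hfinal
end

section
/- Let L : V \ {0} → ℝ be smooth and positively homogeneous of degree two, let Z be an open convex cone contained in {L < 0}, and let w ∈ V \ {0} be a boundary point of Z (within V \ {0}) with L(w) = 0. Suppose the Hessian g(w) is nondegenerate of Lorentzian signature (+,…,+,−). Then for every u ∈ Z one has g(w)(w, u) < 0. -/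
open Filter Topology

/-- Proposition 1(c): if `Z` is an open convex cone on which `L < 0`, and `w ≠ 0` is a
boundary point of `Z` with `L w = 0` at which the Hessian `g(w)` is nondegenerate of
Lorentzian signature `(+,…,+,−)`, then `g(w)(w, u) < 0` for every `u ∈ Z`. -/
theorem boundary_pairing_negative
    {V : Type*} [NormedAddCommGroup V] [NormedSpace ℝ V] [FiniteDimensional ℝ V]
    {N : ℕ} (hdim : Module.finrank ℝ V = N)
    (L : V → ℝ)
    (hsmooth : ContDiffOn ℝ (⊤ : ℕ∞) L {(0 : V)}ᶜ)
    (hhom : ∀ k : ℝ, 0 < k → ∀ v : V, v ≠ 0 → L (k • v) = k ^ 2 * L v)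
    (Z : Set V) (hZopen : IsOpen Z) (hZconv : Convex ℝ Z)
    (hZcone : ∀ k : ℝ, 0 < k → ∀ u ∈ Z, k • u ∈ Z)
    (hZneg : ∀ u ∈ Z, u ≠ 0 ∧ L u < 0)
    (w : V) (hw : w ∈ closure Z) (hw0 : w ≠ 0) (hLw : L w = 0)
    (hLor : ∃ e : Module.Basis (Fin N) ℝ V, ∀ i j : Fin N,
      fderiv ℝ (fderiv ℝ L) w (e i) (e j) =
        if i = j then (if (i : ℕ) + 1 = N then -1 else 1) else 0)
    (u : V) (hu : u ∈ Z) :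
    fderiv ℝ (fderiv ℝ L) w w u < 0 := by
  have hopen : IsOpen ({(0 : V)}ᶜ) := isOpen_compl_singleton
  have hdiffL : ∀ x : V, x ≠ 0 → DifferentiableAt ℝ L x := fun x hx =>
    (hsmooth.contDiffAt (hopen.mem_nhds hx)).differentiableAt (by simp)
  have hF : ContDiffOn ℝ (⊤ : ℕ∞) (fderiv ℝ L) {(0 : V)}ᶜ :=
    hsmooth.fderiv_of_isOpen hopen (by simp)
  have hFd : DifferentiableAt ℝ (fderiv ℝ L) w :=
    (hF.contDiffAt (hopen.mem_nhds hw0)).differentiableAt (by simp)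
  -- (i) the derivative is positively homogeneous of degree 1
  have hfe : ∀ k : ℝ, 0 < k → fderiv ℝ L (k • w) = k • fderiv ℝ L w := by
    intro k hk
    have hkw : k • w ≠ 0 := smul_ne_zero (ne_of_gt hk) hw0
    have hinner : HasFDerivAt (fun v : V => k • v)
        (k • ContinuousLinearMap.id ℝ V) w := by
      exact (k • ContinuousLinearMap.id ℝ V).hasFDerivAt (x := w)
    have h1 : HasFDerivAt (fun v : V => L (k • v))
        (k • fderiv ℝ L (k • w)) w := by
      have := (hdiffL _ hkw).hasFDerivAt.comp w hinner
      have heq : (fderiv ℝ L (k • w)).comp (k • ContinuousLinearMap.id ℝ V)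
          = k • fderiv ℝ L (k • w) := by
        ext v; simp [map_smul]
      simpa [heq, Function.comp_def] using this
    have h2 : HasFDerivAt (fun v : V => k ^ 2 * L v)
        ((k ^ 2) • fderiv ℝ L w) w := (hdiffL w hw0).hasFDerivAt.const_mul (k ^ 2)
    have heq : (fun v : V => L (k • v)) =ᶠ[𝓝 w] fun v : V => k ^ 2 * L v := by
      filter_upwards [hopen.mem_nhds hw0] with v hv using hhom k hk v hv
    have h3 : k • fderiv ℝ L (k • w) = (k ^ 2) • fderiv ℝ L w :=
      (h1.congr_of_eventuallyEq heq.symm).unique h2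
    have := congrArg (fun T => k⁻¹ • T) h3
    simpa [smul_smul, inv_mul_cancel₀ (ne_of_gt hk), pow_two,
      ← mul_assoc] using this
  -- (ii) Euler identity for the derivative: Hessian applied to w equals fderiv L w
  have hBw : fderiv ℝ (fderiv ℝ L) w w = fderiv ℝ L w := by
    have h1 : HasDerivAt (fun k : ℝ => k • w) w 1 := by
      simpa using (hasDerivAt_id (1 : ℝ)).smul_const w
    have h2 : HasFDerivAt (fderiv ℝ L) (fderiv ℝ (fderiv ℝ L) w) ((1 : ℝ) • w) := by
      rw [one_smul]; exact hFd.hasFDerivAt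
    have hc : HasDerivAt (fun k : ℝ => fderiv ℝ L (k • w))
        (fderiv ℝ (fderiv ℝ L) w w) 1 := by
      simpa [Function.comp_def] using h2.comp_hasDerivAt 1 h1
    have heq : (fun k : ℝ => k • fderiv ℝ L w) =ᶠ[𝓝 (1 : ℝ)]
        fun k : ℝ => fderiv ℝ L (k • w) := by
      filter_upwards [eventually_gt_nhds (show (0 : ℝ) < 1 by norm_num)] with k hk
      exact (hfe k hk).symm
    have h4 : HasDerivAt (fun k : ℝ => k • fderiv ℝ L w) (fderiv ℝ L w) 1 := by
      simpa using (hasDerivAt_id (1 : ℝ)).smul_const (fderiv ℝ L w)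
    exact (hc.congr_of_eventuallyEq heq).unique h4
  -- segment fact: w + t • x ∈ Z for x ∈ Z, t > 0
  have hseg : ∀ x ∈ Z, ∀ t : ℝ, 0 < t → w + t • x ∈ Z := by
    intro x hx t ht
    have h1t : (0 : ℝ) < 1 + t := by linarith
    have hcombo : (t / (1 + t)) • x + (1 / (1 + t)) • w ∈ interior Z := by
      refine hZconv.combo_interior_closure_mem_interior ?_ hw ?_ ?_ ?_
      · rwa [hZopen.interior_eq]
      · positivity
      · positivity
      · field_simp
        ring
    rw [hZopen.interior_eq] at hcombo
    have := hZcone (1 + t) h1t _ hcombo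
    have hrw : (1 + t) • ((t / (1 + t)) • x + (1 / (1 + t)) • w)
        = w + t • x := by
      rw [smul_add, smul_smul, smul_smul]
      rw [show (1 + t) * (t / (1 + t)) = t by field_simp,
        show (1 + t) * (1 / (1 + t)) = 1 by field_simp]
      rw [one_smul]; abel
    rwa [hrw] at this
  -- first-order inequality
  have hle : ∀ x ∈ Z, fderiv ℝ L w x ≤ 0 := by
    intro x hx
    have h1 : HasDerivAt (fun t : ℝ => w + t • x) x 0 := by
      simpa using ((hasDerivAt_id (0 : ℝ)).smul_const x).const_add w
    have h2 : HasFDerivAt L (fderiv ℝ L w) (w + (0 : ℝ) • x) := by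
      simpa using (hdiffL w hw0).hasFDerivAt
    have hpsi : HasDerivAt (fun t : ℝ => L (w + t • x)) (fderiv ℝ L w x) 0 := by
      simpa [Function.comp_def] using h2.comp_hasDerivAt 0 h1
    have hslope := hasDerivAt_iff_tendsto_slope.mp hpsi
    have hsub : 𝓝[>] (0 : ℝ) ≤ 𝓝[≠] (0 : ℝ) :=
      nhdsWithin_mono _ (fun y hy => ne_of_gt hy)
    refine le_of_tendsto (hslope.mono_left hsub) ?_
    filter_upwards [self_mem_nhdsWithin] with t ht
    have hneg : L (w + t • x) < 0 := (hZneg _ (hseg x hx t ht)).2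
    have : slope (fun t : ℝ => L (w + t • x)) 0 t
        = t⁻¹ * L (w + t • x) := by
      simp [slope_def_field, hLw, div_eq_inv_mul]
    rw [this]
    have : (0:ℝ) < t⁻¹ := inv_pos.mpr ht
    nlinarith
  -- conclude: the value is ≤ 0 and nonzero
  have key : fderiv ℝ (fderiv ℝ L) w w u = fderiv ℝ L w u := by rw [hBw]
  rw [key]
  rcases lt_or_eq_of_le (hle u hu) with h | h
  · exact h
  -- if it were zero, the whole functional fderiv ℝ L w vanishes
  exfalso
  have hzero : fderiv ℝ L w = 0 := by
    ext v
    rcases eq_or_ne v 0 with rfl | hv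
    · simp
    obtain ⟨ε, hε, hball⟩ := Metric.isOpen_iff.mp hZopen u hu
    have hnv : 0 < ‖v‖ := norm_pos_iff.mpr hv
    obtain ⟨δ, hδpos, hδv⟩ : ∃ δ : ℝ, 0 < δ ∧ δ * ‖v‖ = ε / 2 :=
      ⟨ε / (2 * ‖v‖), by positivity, by field_simp⟩
    have hmem : ∀ s : ℝ, |s| ≤ δ → u + s • v ∈ Z := by
      intro s hs
      apply hball
      rw [Metric.mem_ball, dist_eq_norm]
      have : ‖u + s • v - u‖ = |s| * ‖v‖ := by
        rw [add_sub_cancel_left, norm_smul, Real.norm_eq_abs]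
      rw [this]
      calc |s| * ‖v‖ ≤ δ * ‖v‖ := by
            exact mul_le_mul_of_nonneg_right hs (norm_nonneg v)
        _ = ε / 2 := hδv
        _ < ε := by linarith
    have hp := hle _ (hmem δ (le_of_eq (abs_of_pos hδpos)))
    have hm := hle _ (hmem (-δ) (le_of_eq (by rw [abs_neg, abs_of_pos hδpos])))
    rw [map_add, map_smul, h] at hp hm
    simp only [smul_eq_mul, neg_smul, neg_mul, zero_add] at hp hm
    have h3 : δ * fderiv ℝ L w v = 0 := le_antisymm hp (by linarith)
    have h4 : fderiv ℝ L w v = 0 :=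
      (mul_eq_zero.mp h3).resolve_left (ne_of_gt hδpos)
    simpa using h4
  -- the Hessian is nondegenerate, so this forces w = 0
  obtain ⟨e, he⟩ := hLor
  set B : V →L[ℝ] V →L[ℝ] ℝ := fderiv ℝ (fderiv ℝ L) w with hBdef
  have hBzero : B w = 0 := by rw [hBdef, hBw, hzero]
  have hrepr : ∀ i : Fin N, e.repr w i = 0 := by
    intro i
    have h0 : B w (e i) = 0 := by rw [hBzero]; simp
    have hcomp : B w (e i)
        = e.repr w i * (if (i : ℕ) + 1 = N then -1 else 1) := by
      conv_lhs => rw [show w = ∑ j, e.repr w j • e j from (e.sum_repr w).symm]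
      rw [map_sum, ContinuousLinearMap.sum_apply]
      rw [Finset.sum_eq_single i]
      · rw [map_smul, ContinuousLinearMap.smul_apply, he i i]
        simp
      · intro j _ hj
        rw [map_smul, ContinuousLinearMap.smul_apply, he j i]
        simp [hj]
      · simp
    rw [hcomp] at h0
    rcases em ((i : ℕ) + 1 = N) with hN | hN <;> simp [hN] at h0 <;> exact h0
  apply hw0
  have : e.repr w = 0 := by
    ext i; simpa using hrepr i
  have := congrArg e.repr.symm this
  simpa using this
end

section
/- Let ℓ : V \ {0} → ℝ be positively homogeneous of degree one and smooth, let U* ∈ V* and U ∈ V with U*(U) = −1 and D²(ℓ²)(v)(U, ·) = 0 for all admissible v, and suppose D²(ℓ²)(v)(w,w) > 0 whenever U*(w) = 0, w ≠ 0. Then the bilinear form g(v) := (1/2) D²(ℓ²)(v) − U* ⊗ U* is nondegenerate of Lorentzian signature (+,…,+,−). -/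
lemma lorentz_aux {V : Type*} [AddCommGroup V] [Module ℝ V] [FiniteDimensional ℝ V]
    {N : ℕ} (hdim : Module.finrank ℝ V = N)
    (B : V →ₗ[ℝ] V →ₗ[ℝ] ℝ) (hsymm : ∀ x y, B x y = B y x)
    (hposd : ∀ x, x ≠ 0 → 0 < B x x)
    (U : V) (hU : B U U = 1) :
    ∃ e : Module.Basis (Fin N) ℝ V,
      (∀ i : Fin N, (i : ℕ) + 1 = N → e i = U) ∧
      ∀ i j, B (e i) (e j) = if i = j then 1 else 0 := by
  letI c : InnerProductSpace.Core ℝ V :=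
    { inner := fun x y => B x y
      conj_inner_symm := fun x y => by simpa using hsymm y x
      re_inner_nonneg := fun x => by
        rcases eq_or_ne x 0 with rfl | hx
        · simp
        · simpa using (hposd x hx).le
      add_left := fun x y z => by simp
      smul_left := fun x y r => by simp [mul_comm]
      definite := fun x hx => by
        by_contra h
        exact absurd hx (ne_of_gt (by simpa using hposd x h)) }
  letI : NormedAddCommGroup V := c.toNormedAddCommGroup
  letI : InnerProductSpace ℝ V := InnerProductSpace.ofCore c.toCore
  have hinner : ∀ x y : V, (inner ℝ x y : ℝ) = B x y := fun x y => rfl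
  have hUne : U ≠ 0 := by
    intro h
    rw [h] at hU; simp at hU
  set K := (ℝ ∙ U)ᗮ with hK
  have hrk1 : Module.finrank ℝ (ℝ ∙ U) = 1 := finrank_span_singleton hUne
  have hsum : Module.finrank ℝ (ℝ ∙ U) + Module.finrank ℝ K = N := by
    rw [Submodule.finrank_add_finrank_orthogonal, hdim]
  set m := Module.finrank ℝ K with hm
  have hmN : m + 1 = N := by omega
  let b : OrthonormalBasis (Fin m) ℝ K := stdOrthonormalBasis ℝ K
  have hb := b.orthonormal
  rw [orthonormal_iff_ite] at hb
  let f : Fin N → V := fun i =>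
    if h : (i : ℕ) + 1 = N then U else (b ⟨(i : ℕ), by omega⟩ : V)
  have hbK : ∀ k : Fin m, (inner ℝ U ((b k : V)) : ℝ) = 0 := by
    intro k
    have := (b k).2
    rw [Submodule.mem_orthogonal] at this
    exact this U (Submodule.mem_span_singleton_self U)
  have horth : ∀ i j : Fin N, B (f i) (f j) = if i = j then 1 else 0 := by
    intro i j
    simp only [f]
    by_cases hi : (i : ℕ) + 1 = N <;> by_cases hj : (j : ℕ) + 1 = N
    · have : i = j := Fin.ext (by omega)
      simp [hi, hj, this, hU]
    · have hij : ¬ i = j := fun h => hj (h ▸ hi)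
      rw [dif_pos hi, dif_neg hj, if_neg hij, ← hinner]
      exact hbK _
    · have hij : ¬ i = j := fun h => hi (h ▸ hj)
      rw [dif_neg hi, dif_pos hj, if_neg hij, hsymm, ← hinner]
      exact hbK _
    · rw [dif_neg hi, dif_neg hj, ← hinner, ← Submodule.coe_inner,
        hb ⟨(i : ℕ), by omega⟩ ⟨(j : ℕ), by omega⟩]
      simp only [Fin.mk.injEq]
      by_cases h : i = j
      · simp [h]
      · rw [if_neg (fun hh => h (Fin.ext hh)), if_neg h]
  have hon : Orthonormal ℝ f := by
    rw [orthonormal_iff_ite]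
    intro i j
    rw [hinner]
    exact_mod_cast horth i j
  have hli := hon.linearIndependent
  haveI : Nonempty (Fin N) := ⟨⟨0, by omega⟩⟩
  let e : Module.Basis (Fin N) ℝ V := basisOfLinearIndependentOfCardEqFinrank hli (by simp [hdim])
  have he : ∀ i, e i = f i := fun i => by
    simp [e, coe_basisOfLinearIndependentOfCardEqFinrank]
  refine ⟨e, fun i hi => by rw [he]; simp only [f]; rw [dif_pos hi],
    fun i j => by rw [he, he]; exact horth i j⟩

lemma lorentz_main_aux {V : Type*} [NormedAddCommGroup V] [NormedSpace ℝ V]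
    [FiniteDimensional ℝ V] {N : ℕ} (hdim : Module.finrank ℝ V = N)
    (Ustar : V →L[ℝ] ℝ) (U : V) (H : V →L[ℝ] V →L[ℝ] ℝ)
    (hsym : ∀ x y : V, H x y = H y x) (hUU : Ustar U = -1)
    (hannL : ∀ u : V, H U u = 0)
    (hposH : ∀ w : V, w ≠ 0 → Ustar w = 0 → 0 < H w w) :
    (∀ w : V, (∀ u : V, (1 / 2) * H w u - Ustar w * Ustar u = 0) → w = 0) ∧
      ∃ e : Module.Basis (Fin N) ℝ V, ∀ i j : Fin N,
        (1 / 2) * H (e i) (e j) - Ustar (e i) * Ustar (e j) =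
          if i = j then (if (i : ℕ) + 1 = N then -1 else 1) else 0 := by
  classical
  have hannR : ∀ x : V, H x U = 0 := fun x => (hsym x U).trans (hannL x)
  let B : V →ₗ[ℝ] V →ₗ[ℝ] ℝ := LinearMap.mk₂ ℝ
    (fun x y => (1 / 2) * H x y + Ustar x * Ustar y)
    (fun x x' y => by simp [map_add]; ring)
    (fun c x y => by simp [map_smul]; ring)
    (fun x y y' => by simp [map_add]; ring)
    (fun c x y => by simp [map_smul]; ring)
  have hBapp : ∀ x y : V, B x y = (1 / 2) * H x y + Ustar x * Ustar y := fun x y => rfl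
  have hsymmB : ∀ x y : V, B x y = B y x := fun x y => by
    rw [hBapp, hBapp, hsym x y, mul_comm (Ustar x)]
  have hBU : ∀ x : V, B x U = - Ustar x := fun x => by
    rw [hBapp, hannR, hUU]; ring
  have hU1 : B U U = 1 := by rw [hBU, hUU]; ring
  have hBpos : ∀ x : V, x ≠ 0 → 0 < B x x := by
    intro x hx
    have hpU : Ustar (x + Ustar x • U) = 0 := by simp [hUU]
    have hxp : x = (x + Ustar x • U) - Ustar x • U := by abel
    have hHxx : H x x = H (x + Ustar x • U) (x + Ustar x • U) := by
      conv_lhs => rw [hxp]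
      simp [map_sub, map_smul, hannL, hannR]
    rw [hBapp, hHxx]
    rcases eq_or_ne (x + Ustar x • U) 0 with hp0 | hp0
    · have htne : Ustar x ≠ 0 := by
        intro h0
        rw [h0] at hp0; simp at hp0; exact hx hp0
      rw [hp0]
      simp only [map_zero, ContinuousLinearMap.zero_apply]
      nlinarith [mul_self_pos.mpr htne]
    · have h1 : 0 < H (x + Ustar x • U) (x + Ustar x • U) := hposH _ hp0 hpU
      nlinarith [mul_self_nonneg (Ustar x)]
  obtain ⟨e, helast, horthB⟩ := lorentz_aux hdim B hsymmB hBpos U hU1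
  constructor
  · intro w hw
    have hwU : Ustar w = 0 := by
      have h := hw U
      rw [hannR, hUU] at h
      linarith
    by_contra hw0
    have hpos' : 0 < H w w := hposH w hw0 hwU
    have h := hw w
    rw [hwU] at h
    linarith
  · refine ⟨e, fun i j => ?_⟩
    have hN : 0 < N := i.pos
    have hjlast : e ⟨N - 1, by omega⟩ = U := helast _ (by simp; omega)
    have hUe : ∀ k : Fin N, Ustar (e k) = if (k : ℕ) + 1 = N then -1 else 0 := by
      intro k
      have h1 : B (e k) (e ⟨N - 1, by omega⟩) = if k = ⟨N - 1, by omega⟩ then 1 else 0 :=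
        horthB k _
      rw [hjlast, hBU] at h1
      have hiff : k = (⟨N - 1, by omega⟩ : Fin N) ↔ (k : ℕ) + 1 = N := by
        constructor
        · intro h; rw [h]; simp; omega
        · intro h; apply Fin.ext; simp; omega
      by_cases hk : (k : ℕ) + 1 = N
      · rw [if_pos (hiff.mpr hk)] at h1; rw [if_pos hk]; linarith
      · rw [if_neg (fun hh => hk (hiff.mp hh))] at h1; rw [if_neg hk]; linarith
    have hmain : (1 / 2) * H (e i) (e j) - Ustar (e i) * Ustar (e j)
        = B (e i) (e j) - 2 * (Ustar (e i) * Ustar (e j)) := by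
      rw [hBapp]; ring
    rw [hmain, horthB, hUe, hUe]
    by_cases hij : i = j
    · subst hij
      by_cases hi : (i : ℕ) + 1 = N <;> simp [hi]; ring
    · have h2 : ¬ ((i : ℕ) + 1 = N ∧ (j : ℕ) + 1 = N) := by
        rintro ⟨h1, h2⟩; exact hij (Fin.ext (by omega))
      rw [if_neg hij, if_neg hij]
      by_cases hi : (i : ℕ) + 1 = N <;> by_cases hj : (j : ℕ) + 1 = N <;>
        simp_all

/-- Example 1 of the paper: if `ℓ` is positively homogeneous of degree one and smooth,
`U*` is a covector and `U` a vector with `U*(U) = −1`, the Hessian of `ℓ²` annihilates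
`U` and is positive definite on `ker U*`, then
`g(v) := (1/2) D²(ℓ²)(v) − U* ⊗ U*` is nondegenerate of Lorentzian signature. -/
theorem finsler_metric_of_ell_is_lorentzian
    {V : Type*} [NormedAddCommGroup V] [NormedSpace ℝ V] [FiniteDimensional ℝ V]
    {N : ℕ} (hdim : Module.finrank ℝ V = N)
    (ℓ : V → ℝ) (Ustar : V →L[ℝ] ℝ) (U : V)
    (hsmooth : ContDiffOn ℝ (⊤ : ℕ∞) ℓ {(0 : V)}ᶜ)
    (hhom : ∀ k : ℝ, 0 < k → ∀ v : V, v ≠ 0 → ℓ (k • v) = k * ℓ v)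
    (hUU : Ustar U = -1)
    (hann : ∀ v : V, v ≠ 0 → ∀ u : V,
      fderiv ℝ (fderiv ℝ (fun x => ℓ x ^ 2)) v U u = 0)
    (hpos : ∀ v : V, v ≠ 0 → ∀ w : V, w ≠ 0 → Ustar w = 0 →
      fderiv ℝ (fderiv ℝ (fun x => ℓ x ^ 2)) v w w > 0)
    (v : V) (hv : v ≠ 0) :
    (∀ w : V,
        (∀ u : V, (1 / 2) * fderiv ℝ (fderiv ℝ (fun x => ℓ x ^ 2)) v w u
          - Ustar w * Ustar u = 0) → w = 0) ∧
      ∃ e : Module.Basis (Fin N) ℝ V, ∀ i j : Fin N,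
        (1 / 2) * fderiv ℝ (fderiv ℝ (fun x => ℓ x ^ 2)) v (e i) (e j)
            - Ustar (e i) * Ustar (e j) =
          if i = j then (if (i : ℕ) + 1 = N then -1 else 1) else 0 := by
  have hcd : ContDiffAt ℝ (⊤ : ℕ∞) ℓ v :=
    hsmooth.contDiffAt (isOpen_compl_singleton.mem_nhds hv)
  have hsym : ∀ x y : V, fderiv ℝ (fderiv ℝ (fun x => ℓ x ^ 2)) v x y
      = fderiv ℝ (fderiv ℝ (fun x => ℓ x ^ 2)) v y x := fun x y =>
    ((hcd.pow 2).isSymmSndFDerivAt (by rw [minSmoothness_of_isRCLikeNormedField]; exact WithTop.coe_le_coe.mpr le_top)) x y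
  exact lorentz_main_aux hdim Ustar U (fderiv ℝ (fderiv ℝ (fun x => ℓ x ^ 2)) v)
    hsym hUU (hann v hv) (fun w h1 h2 => hpos v hv w h1 h2)
end
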